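/- arXiv:1912.10472 — 2 statements merged into one kernel-verified Lean document; each statement's English description precedes it below -/
import Mathlib

section
/- Let $p_1, \dots, p_n$ be i.i.d. random variables uniformly distributed on $[0,1]$, and let $p_{(1)} \le \cdots \le p_{(n)}$ be their order statistics. Then the Simes statistic $T = \min_{1 \le l \le n} p_{(l)} \cdot n / l$ satisfies $P(T \le \alpha) = \alpha$ for every $\alpha \in [0,1]$. -/
/-!
The complement of `{T ≤ α}` is the event that `p₍l₎ > l α / n` for every `l`. Let `V_k(m)` be the
volume of `{x ∈ [0, m)ᵏ | x₍l₎ > c l for all l}`; then `V_k(m) = mᵏ - c k mᵏ⁻¹` when `c k ≤ m`.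
The set is invariant under permutations of the coordinates, so up to ties (a null set)
`V_{k+1}(m)` is `k + 1` times the volume of the part where the first coordinate `t` is the largest.
There the constraint for `l = k + 1` reads `t > c (k + 1)`, which makes `t` irrelevant to the
constraints for smaller `l`, and the other coordinates range over the same set inside `[0, t)ᵏ`.
Hence `V_{k+1}(m) = (k + 1) ∫_{c(k+1)}^m V_k(t) dt`, and `c = α / n`, `m = 1` give
`P(T > α) = 1 - α`.
-/

open MeasureTheory ProbabilityTheory
open scoped ENNReal

namespace Simes

open Finset

section Counting

variable {ι α : Type*} [Fintype ι] [LinearOrder α]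

def countLE (x : ι → α) (t : α) : ℕ := #{i | x i ≤ t}

theorem measurable_countLE [TopologicalSpace α] [OrderClosedTopology α] [MeasurableSpace α]
    [OpensMeasurableSpace α] (t : α) : Measurable fun x : ι → α => countLE x t := by
  simp only [countLE, card_filter]
  exact Finset.measurable_sum _ fun i _ =>
    Measurable.ite (measurableSet_Iic.preimage (measurable_pi_apply i)) measurable_const
      measurable_const

theorem countLE_comp_equiv {ι' : Type*} [Fintype ι'] (x : ι → α) (e : ι' ≃ ι) (t : α) :
    countLE (x ∘ e) t = countLE x t := by
  simp only [countLE, card_filter]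
  exact Fintype.sum_equiv e _ _ fun _ => rfl

theorem countLE_lt_card_iff (x : ι → α) (t : α) :
    countLE x t < Fintype.card ι ↔ ∃ i, t < x i := by
  simp [countLE, ← card_univ, card_filter_eq_iff, (card_filter_le _ _).lt_iff_ne]

theorem countLE_le_card (x : ι → α) (t : α) : countLE x t ≤ Fintype.card ι :=
  card_filter_le _ _

theorem countLE_cons {k : ℕ} (s : α) (y : Fin k → α) (t : α) :
    countLE (Fin.cons s y : Fin (k + 1) → α) t = countLE y t + if s ≤ t then 1 else 0 := by
  simp only [countLE, card_filter, Fin.sum_univ_succ, Fin.cons_zero, Fin.cons_succ]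
  ring

theorem countLE_le_countLE_cons {k : ℕ} (s : α) (y : Fin k → α) (t : α) :
    countLE y t ≤ countLE (Fin.cons s y : Fin (k + 1) → α) t := by
  rw [countLE_cons]
  exact Nat.le_add_right _ _

theorem le_iff_lt_countLE_of_monotone {n : ℕ} {g : Fin n → α} (hg : Monotone g) (l : Fin n)
    (t : α) : g l ≤ t ↔ (l : ℕ) < countLE g t := by
  constructor
  · intro h
    calc (l : ℕ) < #(Iic l) := by simp
      _ ≤ countLE g t := card_le_card fun j hj => by simpa using (hg (mem_Iic.mp hj)).trans h
  · intro h
    by_contra! hlt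
    have hsub : ({i | g i ≤ t} : Finset (Fin n)) ⊆ Iio l := fun j hj => by
      simp only [mem_filter, mem_univ, true_and] at hj
      exact mem_Iio.mpr (lt_of_not_ge fun hle => (hlt.trans_le (hg hle)).not_ge hj)
    have := (card_le_card hsub).trans_lt' h
    simp at this

theorem sort_le_iff_lt_countLE {n : ℕ} (x : Fin n → α) (l : Fin n) (t : α) :
    x (Tuple.sort x l) ≤ t ↔ (l : ℕ) < countLE x t := by
  rw [← countLE_comp_equiv x (Tuple.sort x)]
  exact le_iff_lt_countLE_of_monotone (Tuple.monotone_sort x) l t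

end Counting

section StrictMax

variable {ι : Type*}

def strictMaxAt (j : ι) : Set (ι → ℝ) := {x | ∀ i ≠ j, x i < x j}

theorem measurableSet_strictMaxAt [Countable ι] (j : ι) : MeasurableSet (strictMaxAt j) := by
  simp only [strictMaxAt, Set.ofPred_forall]
  exact .iInter fun i => .iInter fun _ =>
    measurableSet_lt (measurable_pi_apply i) (measurable_pi_apply j)

theorem pairwise_disjoint_strictMaxAt :
    Pairwise (Function.onFun Disjoint (strictMaxAt (ι := ι))) :=
  fun j j' hne => Set.disjoint_left.mpr fun _ hj hj' => (hj j' hne.symm).not_gt (hj' j hne)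

theorem comp_swap_mem_strictMaxAt_iff [DecidableEq ι] (x : ι → ℝ) (j j' : ι) :
    x ∘ Equiv.swap j j' ∈ strictMaxAt j' ↔ x ∈ strictMaxAt j := by
  simp only [strictMaxAt, Set.mem_ofPred_eq, Function.comp_apply, Equiv.swap_apply_right]
  refine ⟨fun h i hi => ?_, fun h i hi => h _ ?_⟩
  · simpa using h (Equiv.swap j j' i) (by simpa [Equiv.swap_apply_eq_iff] using hi)
  · simpa [Equiv.swap_apply_eq_iff] using hi

variable [Fintype ι]

theorem volume_setOf_apply_eq_apply {i j : ι} (hij : i ≠ j) :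
    volume {x : ι → ℝ | x i = x j} = 0 := by
  classical
  let φ : (ι → ℝ) →ₗ[ℝ] ℝ :=
    LinearMap.proj (R := ℝ) (φ := fun _ => ℝ) i - LinearMap.proj j
  have hker : {x : ι → ℝ | x i = x j} = LinearMap.ker φ := by
    ext x
    simp [φ, sub_eq_zero]
  rw [hker]
  refine Measure.addHaar_submodule _ _ fun htop => ?_
  have : φ (Pi.single i 1) = 1 := by simp [φ, hij.symm]
  simp [LinearMap.ker_eq_top.mp htop] at this

theorem volume_compl_iUnion_strictMaxAt [Nonempty ι] :
    volume (⋃ j, strictMaxAt (ι := ι) j)ᶜ = 0 := by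
  have hties : (⋃ j, strictMaxAt (ι := ι) j)ᶜ ⊆
      ⋃ (i) (j) (_ : i ≠ j), {x : ι → ℝ | x i = x j} := by
    intro x hx
    obtain ⟨j, hj⟩ := Finite.exists_max x
    simp only [Set.mem_compl_iff, Set.mem_iUnion, not_exists, strictMaxAt, Set.mem_ofPred_eq,
      not_forall, not_lt] at hx
    obtain ⟨i, hij, hi⟩ := hx j
    exact Set.mem_iUnion₂.mpr ⟨i, j, Set.mem_iUnion.mpr ⟨hij, le_antisymm (hj i) hi⟩⟩
  exact measure_mono_null hties <| measure_iUnion_null fun i =>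
    measure_iUnion_null fun j => measure_iUnion_null volume_setOf_apply_eq_apply

theorem volume_preimage_comp_perm (σ : Equiv.Perm ι) (S : Set (ι → ℝ)) :
    volume ((fun x => x ∘ σ) ⁻¹' S) = volume S := by
  have hcoe : ⇑(MeasurableEquiv.piCongrLeft (fun _ : ι => ℝ) σ.symm) = fun x => x ∘ σ := by
    ext x i
    simp [MeasurableEquiv.coe_piCongrLeft, Equiv.piCongrLeft_apply]
  rw [← hcoe]
  exact (volume_measurePreserving_piCongrLeft _ σ.symm).measure_preimage_equiv S

theorem volume_eq_card_mul_volume_inter_strictMaxAt {S : Set (ι → ℝ)} (hS : MeasurableSet S)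
    (hperm : ∀ (σ : Equiv.Perm ι) x, x ∘ σ ∈ S ↔ x ∈ S) (j₀ : ι) :
    volume S = Fintype.card ι * volume (S ∩ strictMaxAt j₀) := by
  classical
  have : Nonempty ι := ⟨j₀⟩
  have hpiece (j : ι) : volume (S ∩ strictMaxAt j) = volume (S ∩ strictMaxAt j₀) := by
    rw [← volume_preimage_comp_perm (Equiv.swap j j₀) (S ∩ strictMaxAt j₀)]
    congr 1
    ext x
    simp [hperm, comp_swap_mem_strictMaxAt_iff]
  have hdisj : Pairwise (Function.onFun Disjoint fun j => S ∩ strictMaxAt j) :=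
    fun j j' hne => (pairwise_disjoint_strictMaxAt hne).mono Set.inter_subset_right
      Set.inter_subset_right
  rw [← measure_inter_conull volume_compl_iUnion_strictMaxAt, Set.inter_iUnion,
    measure_iUnion hdisj fun j => hS.inter (measurableSet_strictMaxAt j), tsum_fintype]
  simp [hpiece]

end StrictMax

/-- The factor `k` makes the truncated `k - 1` harmless at `k = 0`. -/
def acceptVolume (k : ℕ) (c m : ℝ) : ℝ := m ^ k - c * k * m ^ (k - 1)

theorem acceptVolume_succ (k : ℕ) (c m : ℝ) :
    acceptVolume (k + 1) c m = m ^ (k + 1) - c * (k + 1) * m ^ k := by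
  simp [acceptVolume]

theorem acceptVolume_nonneg {k : ℕ} {c m : ℝ} (hc : 0 ≤ c) (hm : c * k ≤ m) :
    0 ≤ acceptVolume k c m := by
  cases k with
  | zero => simp [acceptVolume]
  | succ k =>
    push_cast at hm
    have hm0 : 0 ≤ m := hm.trans' (by positivity)
    rw [acceptVolume_succ, show m ^ (k + 1) - c * (k + 1) * m ^ k = m ^ k * (m - c * (k + 1)) by
      ring]
    exact mul_nonneg (pow_nonneg hm0 k) (by linarith)

theorem hasDerivAt_acceptVolume_succ (k : ℕ) (c t : ℝ) :
    HasDerivAt (acceptVolume (k + 1) c) ((k + 1) * acceptVolume k c t) t := by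
  rw [funext (acceptVolume_succ k c)]
  refine ((hasDerivAt_pow (k + 1) t).sub
    ((hasDerivAt_pow k t).const_mul (c * (k + 1)))).congr_deriv ?_
  simp only [acceptVolume, Nat.add_sub_cancel]
  push_cast
  ring

theorem lintegral_acceptVolume {k : ℕ} {c m : ℝ} (hc : 0 ≤ c) (hm : c * (k + 1) ≤ m) :
    ((k + 1 : ℕ) : ℝ≥0∞) * ∫⁻ t in Set.Ioo (c * (k + 1)) m, .ofReal (acceptVolume k c t) =
      ENNReal.ofReal (acceptVolume (k + 1) c m) := by
  set a := c * (k + 1)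
  have hnonneg : ∀ t ∈ Set.Ioc a m, 0 ≤ (k + 1) * acceptVolume k c t := fun t ht =>
    mul_nonneg (by positivity) (acceptVolume_nonneg hc (by nlinarith [ht.1]))
  have hcont : Continuous fun t => (k + 1) * acceptVolume k c t := by
    unfold acceptVolume
    fun_prop
  rw [← lintegral_const_mul' _ _ (ENNReal.natCast_ne_top _), setLIntegral_congr Ioo_ae_eq_Ioc]
  simp_rw [← ENNReal.ofReal_natCast, ← ENNReal.ofReal_mul (Nat.cast_nonneg _)]
  push_cast
  rw [← ofReal_integral_eq_lintegral_ofReal hcont.integrableOn_Ioc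
      ((ae_restrict_iff' measurableSet_Ioc).mpr (ae_of_all _ hnonneg)),
    ← intervalIntegral.integral_of_le hm,
    intervalIntegral.integral_eq_sub_of_hasDerivAt
      (fun t _ => hasDerivAt_acceptVolume_succ k c t) (hcont.intervalIntegrable a m)]
  congr 1
  simp only [acceptVolume_succ, a]
  ring

theorem volume_eq_lintegral_volume_cons {k : ℕ} {S : Set (Fin (k + 1) → ℝ)}
    (hS : MeasurableSet S) :
    volume S = ∫⁻ t, volume {y : Fin k → ℝ | Fin.cons t y ∈ S} := by
  have h := (volume_preserving_piFinSuccAbove (fun _ : Fin (k + 1) => ℝ) 0).symm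
  rw [← h.measure_preimage_equiv S, Measure.volume_eq_prod,
    Measure.prod_apply (hS.preimage h.measurable)]
  simp only [MeasurableEquiv.piFinSuccAbove_symm_apply, Fin.insertNthEquiv_zero]
  rfl

/-- `x ∈ acceptSet k c` iff the `(l + 1)`-th smallest coordinate of `x` exceeds `c * (l + 1)` for
every `l : Fin k` (`sort_le_iff_lt_countLE`): the Simes test with critical values `c, 2c, …, kc`
does not reject. -/
def acceptSet (k : ℕ) (c : ℝ) : Set (Fin k → ℝ) :=
  {x | ∀ l : Fin k, countLE x (c * (l + 1)) ≤ l}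

/-- The cube is half-open so that the slice of `acceptRegion (k + 1) c m` at a strict maximal
coordinate `t` is exactly `acceptRegion k c t`. -/
def acceptRegion (k : ℕ) (c m : ℝ) : Set (Fin k → ℝ) :=
  Set.univ.pi (fun _ => Set.Ico 0 m) ∩ acceptSet k c

theorem measurableSet_acceptSet (k : ℕ) (c : ℝ) : MeasurableSet (acceptSet k c) := by
  simp only [acceptSet, Set.ofPred_forall]
  exact .iInter fun l => measurableSet_le (measurable_countLE _) measurable_const

theorem measurableSet_acceptRegion (k : ℕ) (c m : ℝ) : MeasurableSet (acceptRegion k c m) :=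
  (MeasurableSet.univ_pi fun _ => measurableSet_Ico).inter (measurableSet_acceptSet k c)

theorem comp_perm_mem_acceptRegion_iff {k : ℕ} (c m : ℝ) (σ : Equiv.Perm (Fin k))
    (x : Fin k → ℝ) :
    x ∘ σ ∈ acceptRegion k c m ↔ x ∈ acceptRegion k c m := by
  simp only [acceptRegion, acceptSet, Set.mem_inter_iff, Set.mem_univ_pi, Set.mem_ofPred_eq,
    countLE_comp_equiv, Function.comp_apply, and_congr_left_iff]
  exact fun _ => σ.forall_congr_right (q := fun i => x i ∈ Set.Ico 0 m)

theorem cons_mem_acceptRegion_inter_strictMaxAt_iff {k : ℕ} {c : ℝ} (hc : 0 ≤ c) (m t : ℝ)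
    (y : Fin k → ℝ) :
    Fin.cons t y ∈ acceptRegion (k + 1) c m ∩ strictMaxAt 0 ↔
      t ∈ Set.Ioo (c * (k + 1)) m ∧ y ∈ acceptRegion k c t := by
  have hthr (l : Fin (k + 1)) : c * ((l : ℕ) + 1) ≤ c * (k + 1) := by
    gcongr
    exact_mod_cast l.is_le
  have hmax : (Fin.cons t y : Fin (k + 1) → ℝ) ∈ strictMaxAt 0 ↔ ∀ i, y i < t := by
    simp [strictMaxAt, Fin.forall_fin_succ]
  have hcube : (Fin.cons t y : Fin (k + 1) → ℝ) ∈ Set.univ.pi (fun _ => Set.Ico 0 m) ↔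
      t ∈ Set.Ico 0 m ∧ ∀ i, y i ∈ Set.Ico 0 m := by
    simp [Fin.forall_fin_succ]
  simp only [acceptRegion, acceptSet, Set.mem_inter_iff, hmax, hcube, Set.mem_univ_pi,
    Set.mem_ofPred_eq, Set.mem_Ioo, Set.mem_Ico]
  constructor
  · rintro ⟨⟨⟨⟨ht0, htm⟩, hym⟩, hcount⟩, hyt⟩
    have hat : c * (k + 1) < t := by
      have hlt : countLE (Fin.cons t y : Fin (k + 1) → ℝ) (c * (k + 1)) <
          Fintype.card (Fin (k + 1)) := by
        simpa [Nat.lt_succ_iff] using hcount (Fin.last k)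
      obtain ⟨i, hi⟩ := (countLE_lt_card_iff _ _).mp hlt
      induction i using Fin.cases with
      | zero => simpa using hi
      | succ i => exact hi.trans (by simpa using hyt i)
    refine ⟨⟨hat, htm⟩, fun i => ⟨(hym i).1, hyt i⟩, fun l => ?_⟩
    simpa using (countLE_le_countLE_cons t y _).trans (hcount l.castSucc)
  · rintro ⟨⟨hat, htm⟩, hy, hcount⟩
    have ht0 : 0 ≤ t := by nlinarith
    refine ⟨⟨⟨⟨ht0, htm⟩, fun i => ⟨(hy i).1, (hy i).2.trans htm⟩⟩, fun l => ?_⟩,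
      fun i => (hy i).2⟩
    rw [countLE_cons, if_neg (hthr l |>.trans_lt hat).not_ge, add_zero]
    induction l using Fin.lastCases with
    | last => simpa using countLE_le_card y _
    | cast l => simpa using hcount l

theorem volume_acceptRegion (k : ℕ) {c m : ℝ} (hc : 0 ≤ c) (hm : c * k ≤ m) :
    volume (acceptRegion k c m) = ENNReal.ofReal (acceptVolume k c m) := by
  induction k generalizing m with
  | zero =>
    rw [Set.eq_univ_of_forall (s := acceptRegion 0 c m) fun x =>
      ⟨fun i _ => i.elim0, fun l => l.elim0⟩]
    simp [acceptVolume, volume_pi]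
  | succ k ih =>
    push_cast at hm
    rw [volume_eq_card_mul_volume_inter_strictMaxAt (measurableSet_acceptRegion _ _ _)
      (comp_perm_mem_acceptRegion_iff c m) 0,
      volume_eq_lintegral_volume_cons ((measurableSet_acceptRegion _ _ _).inter
        (measurableSet_strictMaxAt 0)), Fintype.card_fin, ← lintegral_acceptVolume hc hm,
      ← lintegral_indicator measurableSet_Ioo]
    congr 1
    refine lintegral_congr fun t => ?_
    simp only [cons_mem_acceptRegion_inter_strictMaxAt_iff hc, Set.indicator_apply]
    split_ifs with ht
    · simpa [ht] using ih (m := t) (by nlinarith [ht.1])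
    · simp [ht]

noncomputable def simesStat {n : ℕ} (x : Fin n → ℝ) : ℝ :=
  ⨅ l : Fin n, x (Tuple.sort x l) * n / ((l : ℕ) + 1)

theorem lt_simesStat_iff {n : ℕ} [NeZero n] (x : Fin n → ℝ) (α : ℝ) :
    α < simesStat x ↔ x ∈ acceptSet n (α / n) := by
  have hn : (0 : ℝ) < n := Nat.cast_pos.mpr (Nat.pos_of_neZero n)
  obtain ⟨l₀, hl₀⟩ := exists_eq_ciInf_of_finite
    (f := fun l : Fin n => x (Tuple.sort x l) * n / ((l : ℕ) + 1))
  have hmin : α < simesStat x ↔ ∀ l : Fin n, α < x (Tuple.sort x l) * n / ((l : ℕ) + 1) := by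
    rw [simesStat, ← hl₀]
    exact ⟨fun h l => h.trans_le (hl₀ ▸ ciInf_le (Set.finite_range _).bddBelow l),
      fun h => h l₀⟩
  rw [hmin, acceptSet, Set.mem_ofPred_eq]
  refine forall_congr' fun l => ?_
  rw [lt_div_iff₀ (by positivity), ← div_lt_iff₀ hn, div_mul_eq_mul_div, ← not_le,
    sort_le_iff_lt_countLE, not_lt]

theorem map_eq_volume_restrict_univ_pi_Ico {Ω ι : Type*} [Fintype ι] [MeasurableSpace Ω]
    {μ : Measure Ω} [IsProbabilityMeasure μ] {p : ι → Ω → ℝ} (hp : ∀ i, AEMeasurable (p i) μ)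
    (hind : iIndepFun p μ) (hunif : ∀ i, μ.map (p i) = volume.restrict (Set.Icc 0 1)) :
    μ.map (fun ω i => p i ω) = volume.restrict (Set.univ.pi fun _ => Set.Ico 0 1) := by
  rw [(iIndepFun_iff_map_fun_eq_pi_map hp).mp hind, volume_pi, Measure.restrict_pi_pi]
  simp_rw [hunif, restrict_Ico_eq_restrict_Icc]

end Simes

open Simes in
theorem stmt2_general {Ω : Type*} [MeasurableSpace Ω] (μ : Measure Ω) [IsProbabilityMeasure μ]
    (n : ℕ) [NeZero n] (p : Fin n → Ω → ℝ)
    (hiid : iIndepFun p μ)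
    (hunif : ∀ i, Measure.map (p i) μ = volume.restrict (Set.Icc (0 : ℝ) 1))
    (α : ℝ) (hα : α ∈ Set.Icc (0 : ℝ) 1) :
    μ {ω | (⨅ l : Fin n,
        (fun i => p i ω) (Tuple.sort (fun i => p i ω) l) * n / ((l : ℕ) + 1)) ≤ α}
      = ENNReal.ofReal α := by
  obtain ⟨hα0, hα1⟩ := hα
  have hn : (n : ℝ) ≠ 0 := Nat.cast_ne_zero.mpr (NeZero.ne n)
  -- a map that is not a.e.-measurable has law `0`
  have hp (i : Fin n) : AEMeasurable (p i) μ := .of_map_ne_zero (by simp [hunif i])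
  set X : Ω → Fin n → ℝ := fun ω i => p i ω
  have hX : AEMeasurable X μ := aemeasurable_pi_lambda _ hp
  have : IsProbabilityMeasure (μ.map X) := Measure.isProbabilityMeasure_map hX
  have hA := measurableSet_acceptSet n (α / n)
  calc μ {ω | simesStat (X ω) ≤ α} = μ.map X (acceptSet n (α / n))ᶜ := by
        rw [Measure.map_apply_of_aemeasurable hX hA.compl]
        congr 1
        ext ω
        simp [← lt_simesStat_iff]
    _ = 1 - volume (acceptRegion n (α / n) 1) := by
        rw [prob_compl_eq_one_sub hA, map_eq_volume_restrict_univ_pi_Ico hp hiid hunif,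
          Measure.restrict_apply hA, Set.inter_comm, acceptRegion]
    _ = ENNReal.ofReal α := by
        rw [volume_acceptRegion n (by positivity) (by rwa [div_mul_cancel₀ _ hn]), acceptVolume,
          div_mul_cancel₀ _ hn, ← ENNReal.ofReal_one, ← ENNReal.ofReal_sub _ (by simpa), one_pow,
          one_pow, mul_one, sub_sub_cancel]

/-- For `n` i.i.d. p-values uniform on `[0,1]`, the Simes statistic
`T = min_l p₍l₎ · n / l` satisfies `P(T ≤ α) = α` for every `α ∈ [0,1]`. -/
theorem stmt2 {Ω : Type*} [MeasurableSpace Ω] (μ : Measure Ω) [IsProbabilityMeasure μ]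
    (n : ℕ) [NeZero n] (p : Fin n → Ω → ℝ)
    (hmeas : ∀ i, Measurable (p i))
    (hiid : iIndepFun p μ)
    (hunif : ∀ i, Measure.map (p i) μ = volume.restrict (Set.Icc (0 : ℝ) 1))
    (α : ℝ) (hα : α ∈ Set.Icc (0 : ℝ) 1) :
    μ {ω | (⨅ l : Fin n,
        (fun i => p i ω) (Tuple.sort (fun i => p i ω) l) * n / ((l : ℕ) + 1)) ≤ α}
      = ENNReal.ofReal α :=
  stmt2_general μ n p hiid hunif α hα
end

section
/- Let $p_1, \dots, p_n$ be random variables each marginally uniform on $[0,1]$ (with arbitrary joint distribution). Then the Simes statistic $T = \min_{1 \le l \le n} p_{(l)} \cdot n / l$ satisfies $P(T \le \alpha) \le \alpha \sum_{l=1}^{n} 1/l$ for every $\alpha \in [0,1]$. -/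
open MeasureTheory ProbabilityTheory Finset
open scoped ENNReal

lemma aux_find (c : ℕ → ℝ) (h0 : c 0 = 0) : ∀ m x, 0 < x → x ≤ c m →
    ∃ k < m, c k < x ∧ x ≤ c (k + 1) := by
  intro m
  induction m with
  | zero => intro x hx hxc; rw [h0] at hxc; linarith
  | succ m ih =>
    intro x hx hxc
    by_cases h : c m < x
    · exact ⟨m, Nat.lt_succ_self m, h, hxc⟩
    · obtain ⟨k, hk, h1, h2⟩ := ih x hx (not_lt.mp h)
      exact ⟨k, hk.trans (Nat.lt_succ_self m), h1, h2⟩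

/-- For `n` p-values each marginally uniform on `[0,1]` with arbitrary joint distribution,
the Simes statistic `T = min_l p₍l₎ · n / l` satisfies
`P(T ≤ α) ≤ α ∑_{l=1}^n 1/l` for every `α ∈ [0,1]`. -/
theorem stmt3 {Ω : Type*} [MeasurableSpace Ω] (μ : Measure Ω) [IsProbabilityMeasure μ]
    (n : ℕ) [NeZero n] (p : Fin n → Ω → ℝ)
    (hmeas : ∀ i, Measurable (p i))
    (hunif : ∀ i, Measure.map (p i) μ = volume.restrict (Set.Icc (0 : ℝ) 1))
    (α : ℝ) (hα : α ∈ Set.Icc (0 : ℝ) 1) :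
    μ {ω | (⨅ l : Fin n,
        (fun i => p i ω) (Tuple.sort (fun i => p i ω) l) * n / ((l : ℕ) + 1)) ≤ α}
      ≤ ENNReal.ofReal (α * ∑ l ∈ Finset.range n, (1 : ℝ) / (l + 1)) := by
  obtain ⟨hα0, hα1⟩ := hα
  have hn0 : 0 < n := Nat.pos_of_ne_zero (NeZero.ne n)
  have hn : (0:ℝ) < n := Nat.cast_pos.mpr hn0
  set c : ℕ → ℝ := fun k => α * k / n with hc
  have hc0 : c 0 = 0 := by simp [hc]
  set f : Ω → ℝ≥0∞ := fun ω => ∑ i : Fin n, ∑ k ∈ range n,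
      (Set.Ioc (c k) (c (k+1))).indicator (fun _ => ((k : ℝ≥0∞) + 1)⁻¹) (p i ω) with hf
  have hfm : Measurable f := by
    apply Finset.measurable_sum; intro i _
    apply Finset.measurable_sum; intro k _
    exact (measurable_const.indicator measurableSet_Ioc).comp (hmeas i)
  set A := {ω | (⨅ l : Fin n,
      (fun i => p i ω) (Tuple.sort (fun i => p i ω) l) * n / ((l : ℕ) + 1)) ≤ α} with hA
  set B := ⋃ i, {ω | p i ω ≤ 0} with hB
  have hBnull : μ B = 0 := by
    apply measure_iUnion_null; intro i
    have : {ω | p i ω ≤ 0} = p i ⁻¹' (Set.Iic 0) := rfl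
    rw [this, ← Measure.map_apply (hmeas i) measurableSet_Iic, hunif i,
      Measure.restrict_apply measurableSet_Iic]
    have : Set.Iic (0:ℝ) ∩ Set.Icc 0 1 = {0} := by
      ext x; simp only [Set.mem_inter_iff, Set.mem_Iic, Set.mem_Icc, Set.mem_singleton_iff]
      constructor
      · rintro ⟨h1, h2, _⟩; linarith
      · rintro rfl; norm_num
    rw [this]; simp
  -- pointwise bound
  have key : ∀ ω ∈ A, ω ∉ B → 1 ≤ f ω := by
    intro ω hωA hωB
    set q : Fin n → ℝ := fun i => p i ω with hq
    have hpos : ∀ i, 0 < q i := by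
      intro i
      by_contra h
      exact hωB (Set.mem_iUnion.mpr ⟨i, not_lt.mp h⟩)
    -- get the minimizing index
    have hne : Nonempty (Fin n) := ⟨⟨0, hn0⟩⟩
    obtain ⟨l, hl⟩ := Finite.exists_min (fun l : Fin n => q (Tuple.sort q l) * n / ((l:ℕ) + 1))
    have hlα : q (Tuple.sort q l) * n / ((l:ℕ) + 1) ≤ α :=
      le_trans (le_ciInf hl) hωA
    have hl1 : (0:ℝ) < (l:ℕ) + 1 := by positivity
    have hsl : q (Tuple.sort q l) ≤ c ((l:ℕ) + 1) := by
      rw [hc]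
      rw [div_le_iff₀ hl1] at hlα
      rw [le_div_iff₀ hn]
      push_cast
      nlinarith [hpos (Tuple.sort q l)]
    -- the set T
    set T := Finset.univ.filter (fun i => 0 < q i ∧ q i ≤ c ((l:ℕ) + 1)) with hT
    have hTcard : (l:ℕ) + 1 ≤ T.card := by
      have hsub : (Finset.Iic l).image (Tuple.sort q) ⊆ T := by
        intro i hi
        obtain ⟨j, hj, rfl⟩ := Finset.mem_image.mp hi
        rw [Finset.mem_Iic] at hj
        refine Finset.mem_filter.mpr ⟨Finset.mem_univ _, hpos _, le_trans ?_ hsl⟩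
        exact Tuple.monotone_sort q hj
      calc (l:ℕ) + 1 = (Finset.Iic l).card := (Fin.card_Iic l).symm
        _ = ((Finset.Iic l).image (Tuple.sort q)).card :=
            (Finset.card_image_of_injective _ (Tuple.sort q).injective).symm
        _ ≤ T.card := Finset.card_le_card hsub
    -- count per interval
    have hfω : f ω = ∑ k ∈ range n,
        ((k : ℝ≥0∞) + 1)⁻¹ * (Finset.univ.filter (fun i => q i ∈ Set.Ioc (c k) (c (k+1)))).card := by
      simp only [hf]
      rw [Finset.sum_comm]
      refine Finset.sum_congr rfl fun k _ => ?_
      have : ∀ i : Fin n, (Set.Ioc (c k) (c (k+1))).indicator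
          (fun _ => ((k : ℝ≥0∞) + 1)⁻¹) (p i ω)
          = if q i ∈ Set.Ioc (c k) (c (k+1)) then ((k : ℝ≥0∞) + 1)⁻¹ else 0 := by
        intro i; rw [Set.indicator_apply]
      simp only [this]
      rw [← Finset.sum_filter, Finset.sum_const, nsmul_eq_mul, mul_comm]
    -- now establish 1 ≤ f ω
    rw [hfω]
    have hsubrange : range ((l:ℕ) + 1) ⊆ range n := by
      apply Finset.range_subset_range.mpr; exact l.2
    have step1 : ∑ k ∈ range ((l:ℕ)+1),
        ((k : ℝ≥0∞) + 1)⁻¹ * (Finset.univ.filter (fun i => q i ∈ Set.Ioc (c k) (c (k+1)))).card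
        ≤ ∑ k ∈ range n,
        ((k : ℝ≥0∞) + 1)⁻¹ * (Finset.univ.filter (fun i => q i ∈ Set.Ioc (c k) (c (k+1)))).card :=
      Finset.sum_le_sum_of_subset hsubrange
    refine le_trans ?_ step1
    have step2 : ∑ k ∈ range ((l:ℕ)+1),
        (((l:ℕ) : ℝ≥0∞) + 1)⁻¹ * (Finset.univ.filter (fun i => q i ∈ Set.Ioc (c k) (c (k+1)))).card
        ≤ ∑ k ∈ range ((l:ℕ)+1),
        ((k : ℝ≥0∞) + 1)⁻¹ * (Finset.univ.filter (fun i => q i ∈ Set.Ioc (c k) (c (k+1)))).card := by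
      refine Finset.sum_le_sum fun k hk => ?_
      have hkl : (k:ℕ) ≤ (l:ℕ) := Nat.lt_succ_iff.mp (Finset.mem_range.mp hk)
      gcongr
      all_goals exact_mod_cast hkl
    refine le_trans ?_ step2
    rw [← Finset.mul_sum]
    -- T is covered by the union of the interval filters
    have hcover : (T.card : ℝ≥0∞) ≤ ∑ k ∈ range ((l:ℕ)+1),
        ((Finset.univ.filter (fun i => q i ∈ Set.Ioc (c k) (c (k+1)))).card : ℝ≥0∞) := by
      rw [← Nat.cast_sum]
      apply Nat.cast_le.mpr
      calc T.card ≤ ((range ((l:ℕ)+1)).biUnion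
            (fun k => Finset.univ.filter (fun i => q i ∈ Set.Ioc (c k) (c (k+1))))).card := by
            apply Finset.card_le_card
            intro i hi
            obtain ⟨-, hipos, hile⟩ := Finset.mem_filter.mp hi
            obtain ⟨k, hk, h1, h2⟩ := aux_find c hc0 ((l:ℕ)+1) (q i) hipos hile
            exact Finset.mem_biUnion.mpr ⟨k, Finset.mem_range.mpr hk,
              Finset.mem_filter.mpr ⟨Finset.mem_univ _, h1, h2⟩⟩
        _ ≤ ∑ k ∈ range ((l:ℕ)+1),
            (Finset.univ.filter (fun i => q i ∈ Set.Ioc (c k) (c (k+1)))).card :=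
            Finset.card_biUnion_le
    have hTcard' : ((l:ℕ) + 1 : ℝ≥0∞) ≤ T.card := by exact_mod_cast hTcard
    calc (1:ℝ≥0∞) = (((l:ℕ) : ℝ≥0∞) + 1)⁻¹ * (((l:ℕ) : ℝ≥0∞) + 1) := by
          rw [ENNReal.inv_mul_cancel (by simp) (by simp)]
      _ ≤ (((l:ℕ) : ℝ≥0∞) + 1)⁻¹ * ∑ k ∈ range ((l:ℕ)+1),
            ((Finset.univ.filter (fun i => q i ∈ Set.Ioc (c k) (c (k+1)))).card : ℝ≥0∞) := by
          gcongr
          exact le_trans (by push_cast; exact hTcard') hcover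
  -- measure bound via Markov
  have hAsub : A ⊆ {ω | 1 ≤ f ω} ∪ B := by
    intro ω hω
    by_cases h : ω ∈ B
    · exact Or.inr h
    · exact Or.inl (key ω hω h)
  have hmarkov : μ {ω | 1 ≤ f ω} ≤ ∫⁻ ω, f ω ∂μ := by
    have := mul_meas_ge_le_lintegral₀ (μ := μ) hfm.aemeasurable 1
    simpa using this
  have h1 : μ A ≤ ∫⁻ ω, f ω ∂μ := by
    calc μ A ≤ μ ({ω | 1 ≤ f ω} ∪ B) := measure_mono hAsub
      _ ≤ μ {ω | 1 ≤ f ω} + μ B := measure_union_le _ _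
      _ = μ {ω | 1 ≤ f ω} := by rw [hBnull, add_zero]
      _ ≤ ∫⁻ ω, f ω ∂μ := hmarkov
  refine le_trans h1 ?_
  -- compute the integral
  have hint : ∫⁻ ω, f ω ∂μ = ∑ i : Fin n, ∑ k ∈ range n,
      ((k : ℝ≥0∞) + 1)⁻¹ * ENNReal.ofReal (α / n) := by
    have htm : ∀ (i : Fin n) (k : ℕ), Measurable fun ω =>
        (Set.Ioc (c k) (c (k+1))).indicator (fun _ => ((k : ℝ≥0∞) + 1)⁻¹) (p i ω) :=
      fun i k => (measurable_const.indicator measurableSet_Ioc).comp (hmeas i)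
    simp only [hf]
    rw [lintegral_finset_sum _ (fun i _ => Finset.measurable_sum _ (fun k _ => htm i k))]
    refine Finset.sum_congr rfl fun i _ => ?_
    rw [lintegral_finset_sum _ (fun k _ => htm i k)]
    refine Finset.sum_congr rfl fun k hk => ?_
    have heq : (fun ω => (Set.Ioc (c k) (c (k+1))).indicator
        (fun _ => ((k : ℝ≥0∞) + 1)⁻¹) (p i ω))
        = (p i ⁻¹' Set.Ioc (c k) (c (k+1))).indicator (fun _ => ((k : ℝ≥0∞) + 1)⁻¹) := by
      funext ω
      exact (Set.indicator_comp_right (s := Set.Ioc (c k) (c (k+1))) (g := fun _ => ((k : ℝ≥0∞) + 1)⁻¹) (p i)).symm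
    rw [heq, lintegral_indicator_const ((hmeas i) measurableSet_Ioc)]
    have hμ : μ (p i ⁻¹' Set.Ioc (c k) (c (k+1))) = ENNReal.ofReal (α / n) := by
      rw [← Measure.map_apply (hmeas i) measurableSet_Ioc, hunif i,
        Measure.restrict_apply measurableSet_Ioc]
      have hsub : Set.Ioc (c k) (c (k+1)) ∩ Set.Icc 0 1 = Set.Ioc (c k) (c (k+1)) := by
        apply Set.inter_eq_self_of_subset_left
        intro x hx
        obtain ⟨h1, h2⟩ := hx
        constructor
        · have : 0 ≤ c k := by
            simp only [hc]; positivity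
          linarith
        · have hkn : (k:ℕ) + 1 ≤ n := Finset.mem_range.mp hk
          have hkc : ((k:ℝ) + 1) ≤ n := by exact_mod_cast hkn
          have : c (k+1) ≤ 1 := by
            simp only [hc]
            rw [div_le_one hn]
            push_cast
            nlinarith [hkc]
          linarith
      rw [hsub, Real.volume_Ioc]
      congr 1
      simp only [hc]
      push_cast
      field_simp
      ring
    rw [hμ]
  rw [hint]
  -- final arithmetic
  have hterm : ∀ k ∈ range n, ((k : ℝ≥0∞) + 1)⁻¹ * ENNReal.ofReal (α / n)
      = ENNReal.ofReal ((1 / ((k:ℝ) + 1)) * (α / n)) := by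
    intro k _
    rw [ENNReal.ofReal_mul (by positivity), one_div,
      ENNReal.ofReal_inv_of_pos (by positivity)]
    congr 2
    rw [ENNReal.ofReal_add (by positivity) zero_le_one, ENNReal.ofReal_natCast,
      ENNReal.ofReal_one]
  rw [Finset.sum_congr rfl hterm, ← ENNReal.ofReal_sum_of_nonneg (fun k _ => by positivity),
    Finset.sum_const, Finset.card_univ, Fintype.card_fin, nsmul_eq_mul,
    ← ENNReal.ofReal_natCast n, ← ENNReal.ofReal_mul (by positivity)]
  apply le_of_eq
  congr 1
  rw [Finset.mul_sum, Finset.mul_sum]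
  refine Finset.sum_congr rfl fun k _ => ?_
  field_simp
end
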